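/- arXiv:1206.2997 — 2 statements merged into one kernel-verified Lean document; each statement's English description precedes it below -/
import Mathlib

section
/- Let d ≥ 3 be an integer, let (Ω, ν) be a finite measure space, and let α, β, p be real numbers with α + β = d, α > 0, and d/min(α, d) < p < ∞. Let K be a measurable kernel on ((0,∞)×Ω)² satisfying |K(r, y, r', y')| ≤ r^{-α} (r')^{-β} whenever r > r', and K(r, y, r', y') = 0 whenever r ≤ r'. Then the integral operator (Tf)(r, y) = ∫∫ K(r, y, r', y') f(r', y') (r')^{d-1} dr' dν(y') is bounded on L^p((0,∞)×Ω, r^{d-1} dr ⊗ ν): there exists C > 0 such that ‖Tf‖_p ≤ C‖f‖_p for all f in this L^p space. -/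
/-!
Schur's test. On the support of the measure, `|K|` is dominated by the radial kernel
`k(r, r') = 1_{r' < r} r^{-α} r'^{-β}`, which ignores `Ω`, so it suffices to bound the positive
operator with kernel `k`. For the weight `w(r) = r^{-s}` one computes exactly
`∫ k(r, r') r'^{-sq} = ν(Ω) r^{-sq} / (α - sq)` and `∫ k(r, r') r^{-sp} = ν(Ω) r'^{-sp} / (sp - β)`
(integrals against `r^{d-1} dr ⊗ ν`, `q` the conjugate exponent), both finite when
`β/p < s < α/q`. Since `α + β = d`, such an `s` exists exactly when `p > d/α`.
-/

open MeasureTheory Set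
open scoped ENNReal

/-- The measure `r^{d-1} dr` on `(0,∞)` (with `dr` Lebesgue measure). -/
noncomputable def coneMeasure (d : ℕ) : Measure ℝ :=
  (volume.restrict (Ioi (0 : ℝ))).withDensity (fun r => ENNReal.ofReal (r ^ ((d : ℝ) - 1)))

section SchurTest

variable {X : Type*} [MeasurableSpace X] {μ : Measure X} {p q : ℝ}

theorem lintegral_mul_le_weighted_Lp_mul_Lq (hpq : p.HolderConjugate q) {κ w F : X → ℝ≥0∞}
    (hκ : AEMeasurable κ μ) (hw : AEMeasurable w μ) (hF : AEMeasurable F μ)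
    (hw0 : ∀ᵐ x ∂μ, w x ≠ 0 ∧ w x ≠ ∞) :
    ∫⁻ x, κ x * F x ∂μ ≤
      (∫⁻ x, κ x * w x ^ q ∂μ) ^ (1 / q) * (∫⁻ x, κ x * (F x / w x) ^ p ∂μ) ^ (1 / p) := by
  have hp0 := hpq.pos
  have hq0 := hpq.symm.pos
  have hsplit : ∀ᵐ x ∂μ,
      κ x * F x = (κ x ^ (1 / q) * w x) * (κ x ^ (1 / p) * (F x / w x)) := by
    filter_upwards [hw0] with x ⟨hwx0, hwxtop⟩
    rw [mul_mul_mul_comm, ← ENNReal.rpow_add_of_nonneg _ _ (by positivity) (by positivity),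
      one_div, one_div, add_comm, hpq.inv_add_inv_eq_one, ENNReal.rpow_one,
      mul_comm (w x), ENNReal.div_mul_cancel hwx0 hwxtop]
  have hpow {r : ℝ} (hr : 0 < r) (a b : ℝ≥0∞) : (a ^ (1 / r) * b) ^ r = a * b ^ r := by
    rw [ENNReal.mul_rpow_of_nonneg _ _ hr.le, ← ENNReal.rpow_mul, one_div_mul_cancel hr.ne',
      ENNReal.rpow_one]
  rw [lintegral_congr_ae hsplit]
  refine (ENNReal.lintegral_mul_le_Lp_mul_Lq μ hpq.symm (by fun_prop) (by fun_prop)).trans_eq ?_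
  simp only [hpow hq0, hpow hp0]

theorem lintegral_rpow_lintegral_le_of_schur [SFinite μ] (hpq : p.HolderConjugate q)
    {k : X → X → ℝ≥0∞} (hk : Measurable (Function.uncurry k)) {w F : X → ℝ≥0∞}
    (hw : Measurable w) (hw0 : ∀ᵐ x ∂μ, w x ≠ 0 ∧ w x ≠ ∞) (hF : AEMeasurable F μ)
    {A B : ℝ≥0∞} (hA : ∀ᵐ x ∂μ, ∫⁻ y, k x y * w y ^ q ∂μ ≤ A * w x ^ q)
    (hB : ∀ᵐ y ∂μ, ∫⁻ x, k x y * w x ^ p ∂μ ≤ B * w y ^ p) :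
    ∫⁻ x, (∫⁻ y, k x y * F y ∂μ) ^ p ∂μ ≤ A ^ (p / q) * B * ∫⁻ x, F x ^ p ∂μ := by
  have hp0 := hpq.pos
  have hq0 := hpq.symm.pos
  set G := fun y => (F y / w y) ^ p
  have hG : AEMeasurable G μ := (hF.div hw.aemeasurable).pow_const p
  have hrow : ∀ᵐ x ∂μ, (∫⁻ y, k x y * F y ∂μ) ^ p
      ≤ A ^ (p / q) * (w x ^ p * ∫⁻ y, k x y * G y ∂μ) := by
    filter_upwards [hA] with x hAx
    have hkx : Measurable (k x) := hk.comp measurable_prodMk_left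
    calc (∫⁻ y, k x y * F y ∂μ) ^ p
        ≤ ((∫⁻ y, k x y * w y ^ q ∂μ) ^ (1 / q) * (∫⁻ y, k x y * G y ∂μ) ^ (1 / p)) ^ p :=
          ENNReal.rpow_le_rpow (lintegral_mul_le_weighted_Lp_mul_Lq hpq hkx.aemeasurable
            hw.aemeasurable hF hw0) hp0.le
      _ ≤ ((A * w x ^ q) ^ (1 / q) * (∫⁻ y, k x y * G y ∂μ) ^ (1 / p)) ^ p := by gcongr
      _ = A ^ (p / q) * (w x ^ p * ∫⁻ y, k x y * G y ∂μ) := by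
          rw [ENNReal.mul_rpow_of_nonneg _ _ hp0.le, ← ENNReal.rpow_mul, ← ENNReal.rpow_mul,
            one_div_mul_cancel hp0.ne', ENNReal.rpow_one,
            ENNReal.mul_rpow_of_nonneg _ _ (by positivity), ← ENNReal.rpow_mul,
            ← mul_assoc, ← mul_assoc]
          congr 3 <;> field_simp
  have hprod : AEMeasurable (Function.uncurry fun x y => w x ^ p * (k x y * G y)) (μ.prod μ) :=
    ((hw.pow_const p).comp measurable_fst).aemeasurable.mul (hk.aemeasurable.mul hG.comp_snd)
  calc ∫⁻ x, (∫⁻ y, k x y * F y ∂μ) ^ p ∂μ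
      ≤ ∫⁻ x, A ^ (p / q) * (w x ^ p * ∫⁻ y, k x y * G y ∂μ) ∂μ := lintegral_mono_ae hrow
    _ = A ^ (p / q) * ∫⁻ x, ∫⁻ y, w x ^ p * (k x y * G y) ∂μ ∂μ := by
        rw [← lintegral_const_mul'' _ hprod.lintegral_prod_right]
        refine lintegral_congr fun x => ?_
        exact congrArg _ (lintegral_const_mul'' _
          ((hk.comp measurable_prodMk_left).aemeasurable.mul hG)).symm
    _ = A ^ (p / q) * ∫⁻ y, G y * ∫⁻ x, k x y * w x ^ p ∂μ ∂μ := by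
        rw [lintegral_lintegral_swap hprod]
        congr 1
        refine lintegral_congr fun y => ?_
        have hcol : Measurable fun x => k x y * w x ^ p :=
          (hk.comp measurable_prodMk_right).mul (hw.pow_const p)
        rw [← lintegral_const_mul _ hcol]
        congr 1 with x
        ring
    _ ≤ A ^ (p / q) * ∫⁻ y, G y * (B * w y ^ p) ∂μ := by
        gcongr A ^ (p / q) * ?_
        exact lintegral_mono_ae (hB.mono fun y hy => by gcongr)
    _ = A ^ (p / q) * B * ∫⁻ y, F y ^ p ∂μ := by
        rw [mul_assoc, ← lintegral_const_mul'' _ (hF.pow_const p)]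
        congr 1
        refine lintegral_congr_ae (hw0.mono fun y ⟨hwy0, hwytop⟩ => ?_)
        simp only [G]
        rw [mul_left_comm, ← ENNReal.mul_rpow_of_nonneg _ _ hp0.le,
          ENNReal.div_mul_cancel hwy0 hwytop]

theorem eLpNorm_le_of_schur [SFinite μ] (hpq : p.HolderConjugate q)
    {k : X → X → ℝ≥0∞} (hk : Measurable (Function.uncurry k)) {w : X → ℝ≥0∞}
    (hw : Measurable w) (hw0 : ∀ᵐ x ∂μ, w x ≠ 0 ∧ w x ≠ ∞)
    {A B : ℝ≥0∞} (hA : ∀ᵐ x ∂μ, ∫⁻ y, k x y * w y ^ q ∂μ ≤ A * w x ^ q)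
    (hB : ∀ᵐ y ∂μ, ∫⁻ x, k x y * w x ^ p ∂μ ≤ B * w y ^ p)
    {ε ε' : Type*} [TopologicalSpace ε] [ContinuousENorm ε] [ENorm ε']
    {f : X → ε} (hf : AEStronglyMeasurable f μ) {g : X → ε'}
    (hg : ∀ᵐ x ∂μ, ‖g x‖ₑ ≤ ∫⁻ y, k x y * ‖f y‖ₑ ∂μ) :
    eLpNorm g (ENNReal.ofReal p) μ
      ≤ A ^ (1 / q) * B ^ (1 / p) * eLpNorm f (ENNReal.ofReal p) μ := by
  have hp0 := hpq.pos
  have hp : ENNReal.ofReal p ≠ 0 := by simpa using hp0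
  rw [eLpNorm_eq_lintegral_rpow_enorm_toReal hp ENNReal.ofReal_ne_top,
    eLpNorm_eq_lintegral_rpow_enorm_toReal hp ENNReal.ofReal_ne_top, ENNReal.toReal_ofReal hp0.le]
  calc (∫⁻ x, ‖g x‖ₑ ^ p ∂μ) ^ (1 / p)
      ≤ (∫⁻ x, (∫⁻ y, k x y * ‖f y‖ₑ ∂μ) ^ p ∂μ) ^ (1 / p) := by
        gcongr ?_ ^ _
        exact lintegral_mono_ae (hg.mono fun x hx => by gcongr)
    _ ≤ (A ^ (p / q) * B * ∫⁻ x, ‖f x‖ₑ ^ p ∂μ) ^ (1 / p) := by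
        gcongr
        exact lintegral_rpow_lintegral_le_of_schur hpq hk hw hw0 hf.enorm hA hB
    _ = A ^ (1 / q) * B ^ (1 / p) * (∫⁻ x, ‖f x‖ₑ ^ p ∂μ) ^ (1 / p) := by
        rw [ENNReal.mul_rpow_of_nonneg _ _ (by positivity),
          ENNReal.mul_rpow_of_nonneg _ _ (by positivity), ← ENNReal.rpow_mul]
        congr 3
        field_simp

end SchurTest

theorem ofReal_rpow_mul_ofReal_rpow {x : ℝ} (hx : 0 < x) (a b : ℝ) :
    ENNReal.ofReal x ^ a * ENNReal.ofReal x ^ b = ENNReal.ofReal (x ^ (a + b)) := by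
  rw [← ENNReal.rpow_add _ _ (by simpa using hx) ENNReal.ofReal_ne_top,
    ENNReal.ofReal_rpow_of_pos hx]

theorem setLIntegral_Ioo_rpow {c R : ℝ} (hc : -1 < c) (hR : 0 < R) :
    ∫⁻ x in Ioo 0 R, ENNReal.ofReal (x ^ c) = ENNReal.ofReal (R ^ (c + 1) / (c + 1)) := by
  have hint : IntegrableOn (fun x : ℝ => x ^ c) (Ioo 0 R) :=
    (intervalIntegral.intervalIntegrable_rpow' (a := 0) (b := R) hc).1.mono_set
      Ioo_subset_Ioc_self
  rw [← ofReal_integral_eq_lintegral_ofReal hint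
      ((ae_restrict_mem measurableSet_Ioo).mono fun x hx => Real.rpow_nonneg hx.1.le c),
    ← integral_Ioc_eq_integral_Ioo, ← intervalIntegral.integral_of_le hR.le,
    integral_rpow (Or.inl hc), Real.zero_rpow (by linarith), sub_zero]

theorem setLIntegral_Ioi_rpow {c R : ℝ} (hc : c < -1) (hR : 0 < R) :
    ∫⁻ x in Ioi R, ENNReal.ofReal (x ^ c) = ENNReal.ofReal (R ^ (c + 1) / -(c + 1)) := by
  rw [← ofReal_integral_eq_lintegral_ofReal (integrableOn_Ioi_rpow_of_lt hc hR)
      ((ae_restrict_mem measurableSet_Ioi).mono fun x hx => Real.rpow_nonneg (hR.trans hx).le c),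
    integral_Ioi_rpow_of_lt hc hR, div_neg, neg_div]

theorem lintegral_fun_fst {X Y : Type*} [MeasurableSpace X] [MeasurableSpace Y]
    (μ : Measure X) (ν : Measure Y) [SFinite ν] {g : X → ℝ≥0∞} (hg : AEMeasurable g μ) :
    ∫⁻ z, g z.1 ∂μ.prod ν = ν univ * ∫⁻ x, g x ∂μ := by
  simpa [mul_comm] using lintegral_prod_mul (ν := ν) hg (aemeasurable_const (b := 1))

theorem enorm_integral_mul_le_lintegral {X : Type*} [MeasurableSpace X] {μ : Measure X}
    {K : X → ℝ} {k : X → ℝ≥0∞} (hK : ∀ᵐ y ∂μ, ‖K y‖ₑ ≤ k y) (f : X → ℝ) :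
    ‖∫ y, K y * f y ∂μ‖ₑ ≤ ∫⁻ y, k y * ‖f y‖ₑ ∂μ :=
  (enorm_integral_le_lintegral_enorm _).trans
    (lintegral_mono_ae (hK.mono fun y hy => by rw [enorm_mul]; gcongr))

namespace coneMeasure

instance (d : ℕ) : SFinite (coneMeasure d) := by
  unfold coneMeasure
  infer_instance

theorem ae_pos (d : ℕ) : ∀ᵐ r ∂coneMeasure d, 0 < r :=
  (withDensity_absolutelyContinuous _ _).ae_le (ae_restrict_mem measurableSet_Ioi)

theorem setLIntegral_rpow (d : ℕ) {s : Set ℝ} (hs : MeasurableSet s) (hs0 : s ⊆ Ioi 0) (e : ℝ) :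
    ∫⁻ r in s, ENNReal.ofReal (r ^ e) ∂coneMeasure d
      = ∫⁻ r in s, ENNReal.ofReal (r ^ (e + d - 1)) := by
  rw [coneMeasure, restrict_withDensity hs, Measure.restrict_restrict hs, inter_eq_left.2 hs0,
    lintegral_withDensity_eq_lintegral_mul _ (by fun_prop) (by fun_prop)]
  refine setLIntegral_congr_fun hs fun r hr => ?_
  rw [Pi.mul_apply, ← ENNReal.ofReal_mul (Real.rpow_nonneg (hs0 hr).le _),
    ← Real.rpow_add (hs0 hr)]
  ring_nf

theorem setLIntegral_Ioo_rpow (d : ℕ) {e R : ℝ} (he : 0 < e + d) (hR : 0 < R) :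
    ∫⁻ r in Ioo 0 R, ENNReal.ofReal (r ^ e) ∂coneMeasure d
      = ENNReal.ofReal (R ^ (e + d) / (e + d)) := by
  rw [setLIntegral_rpow d measurableSet_Ioo Ioo_subset_Ioi_self,
    _root_.setLIntegral_Ioo_rpow (by linarith) hR, sub_add_cancel]

theorem setLIntegral_Ioi_rpow (d : ℕ) {e R : ℝ} (he : e + d < 0) (hR : 0 < R) :
    ∫⁻ r in Ioi R, ENNReal.ofReal (r ^ e) ∂coneMeasure d
      = ENNReal.ofReal (R ^ (e + d) / -(e + d)) := by
  rw [setLIntegral_rpow d measurableSet_Ioi (Ioi_subset_Ioi hR.le),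
    _root_.setLIntegral_Ioi_rpow (by linarith) hR, sub_add_cancel]

end coneMeasure

noncomputable def coneKernel (α β r r' : ℝ) : ℝ≥0∞ :=
  if r' < r then ENNReal.ofReal r ^ (-α) * ENNReal.ofReal r' ^ (-β) else 0

namespace coneKernel

variable {α β : ℝ}

@[fun_prop]
theorem _root_.Measurable.coneKernel {X : Type*} [MeasurableSpace X] {f g : X → ℝ}
    (hf : Measurable f) (hg : Measurable g) : Measurable fun x => coneKernel α β (f x) (g x) :=
  Measurable.ite (measurableSet_lt hg hf) (by fun_prop) measurable_const

theorem lintegral_mul_rpow_left {d : ℕ} (hαβ : α + β = d) {t r : ℝ} (ht : t < α) (hr : 0 < r) :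
    ∫⁻ r', coneKernel α β r r' * ENNReal.ofReal r' ^ (-t) ∂coneMeasure d
      = ENNReal.ofReal (1 / (α - t)) * ENNReal.ofReal r ^ (-t) := by
  have hcongr : ∀ᵐ r' ∂coneMeasure d, coneKernel α β r r' * ENNReal.ofReal r' ^ (-t)
      = ENNReal.ofReal r ^ (-α)
          * (Ioo 0 r).indicator (fun x => ENNReal.ofReal (x ^ (-β - t))) r' := by
    filter_upwards [coneMeasure.ae_pos d] with r' hr'
    by_cases hrr : r' < r
    · rw [coneKernel, if_pos hrr, indicator_of_mem (show r' ∈ Ioo 0 r from ⟨hr', hrr⟩),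
        mul_assoc, ofReal_rpow_mul_ofReal_rpow hr', sub_eq_add_neg]
    · rw [coneKernel, if_neg hrr,
        indicator_of_notMem (show r' ∉ Ioo 0 r from fun h => hrr h.2), zero_mul, mul_zero]
  rw [lintegral_congr_ae hcongr, lintegral_const_mul _ ((by fun_prop : Measurable fun x : ℝ =>
      ENNReal.ofReal (x ^ (-β - t))).indicator measurableSet_Ioo),
    lintegral_indicator measurableSet_Ioo,
    coneMeasure.setLIntegral_Ioo_rpow d (by linarith) hr,
    show -β - t + d = α - t by linarith, div_eq_mul_one_div, ENNReal.ofReal_mul (by positivity),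
    ← ENNReal.ofReal_rpow_of_pos hr, ← mul_assoc, ← ENNReal.rpow_add _ _ (by simpa using hr)
      ENNReal.ofReal_ne_top, mul_comm]
  ring_nf

theorem lintegral_mul_rpow_right {d : ℕ} (hαβ : α + β = d) {t r' : ℝ} (ht : β < t)
    (hr' : 0 < r') :
    ∫⁻ r, coneKernel α β r r' * ENNReal.ofReal r ^ (-t) ∂coneMeasure d
      = ENNReal.ofReal (1 / (t - β)) * ENNReal.ofReal r' ^ (-t) := by
  have hcongr : ∀ᵐ r ∂coneMeasure d, coneKernel α β r r' * ENNReal.ofReal r ^ (-t)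
      = ENNReal.ofReal r' ^ (-β)
          * (Ioi r').indicator (fun x => ENNReal.ofReal (x ^ (-α - t))) r := by
    refine ae_of_all _ fun r => ?_
    by_cases hrr : r' < r
    · rw [coneKernel, if_pos hrr, indicator_of_mem (show r ∈ Ioi r' from hrr),
        mul_comm (ENNReal.ofReal r ^ (-α)), mul_assoc,
        ofReal_rpow_mul_ofReal_rpow (hr'.trans hrr), sub_eq_add_neg]
    · rw [coneKernel, if_neg hrr, indicator_of_notMem (show r ∉ Ioi r' from hrr), zero_mul,
        mul_zero]
  rw [lintegral_congr_ae hcongr, lintegral_const_mul _ ((by fun_prop : Measurable fun x : ℝ =>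
      ENNReal.ofReal (x ^ (-α - t))).indicator measurableSet_Ioi),
    lintegral_indicator measurableSet_Ioi,
    coneMeasure.setLIntegral_Ioi_rpow d (by linarith) hr',
    show -α - t + d = β - t by linarith, div_eq_mul_one_div, ENNReal.ofReal_mul (by positivity),
    ← ENNReal.ofReal_rpow_of_pos hr', ← mul_assoc, ← ENNReal.rpow_add _ _ (by simpa using hr')
      ENNReal.ofReal_ne_top, mul_comm, neg_sub]
  ring_nf

end coneKernel

section ConeProduct

variable {d : ℕ} {Ω : Type*} [MeasurableSpace Ω] (ν : Measure Ω) {α β : ℝ}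

theorem ae_pos_fst_coneMeasure_prod [SFinite ν] :
    ∀ᵐ z ∂(coneMeasure d).prod ν, 0 < z.1 :=
  Measure.quasiMeasurePreserving_fst.ae (coneMeasure.ae_pos d)

theorem exists_eLpNorm_le_of_le_coneKernel [IsFiniteMeasure ν] {p : ℝ} (hαβ : α + β = d)
    (hp : 1 < p) (hdp : d < α * p) (ε ε' : Type*) [TopologicalSpace ε] [ContinuousENorm ε]
    [ENorm ε'] :
    ∃ C : ℝ≥0∞, C ≠ ∞ ∧ ∀ {f : ℝ × Ω → ε} {g : ℝ × Ω → ε'},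
      AEStronglyMeasurable f ((coneMeasure d).prod ν) →
      (∀ᵐ z ∂(coneMeasure d).prod ν,
        ‖g z‖ₑ ≤ ∫⁻ z', coneKernel α β z.1 z'.1 * ‖f z'‖ₑ ∂(coneMeasure d).prod ν) →
      eLpNorm g (ENNReal.ofReal p) ((coneMeasure d).prod ν)
        ≤ C * eLpNorm f (ENNReal.ofReal p) ((coneMeasure d).prod ν) := by
  set q := p.conjExponent
  have hpq : p.HolderConjugate q := .conjExponent hp
  -- the midpoint of the interval `(β / p, α / q)`
  set s := (β + α * (p - 1)) / (2 * p)
  have hsq : s * q < α := by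
    have : s * q = (β + α * (p - 1)) / (2 * (p - 1)) := by
      simp only [s, q, Real.conjExponent]
      field_simp [(by linarith : p - 1 ≠ 0)]
    rw [this, div_lt_iff₀ (by linarith)]
    linarith
  have hsp : β < s * p := by
    have : s * p = (β + α * (p - 1)) / 2 := by
      simp only [s]
      field_simp
    linarith
  have hw0 : ∀ᵐ z ∂(coneMeasure d).prod ν,
      ENNReal.ofReal z.1 ^ (-s) ≠ 0 ∧ ENNReal.ofReal z.1 ^ (-s) ≠ ∞ := by
    filter_upwards [ae_pos_fst_coneMeasure_prod ν] with z hz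
    exact ⟨by simp [ENNReal.rpow_eq_zero_iff, hz], by simp [ENNReal.rpow_eq_top_iff, hz]⟩
  have hA : ∀ᵐ z ∂(coneMeasure d).prod ν,
      ∫⁻ z', coneKernel α β z.1 z'.1 * (ENNReal.ofReal z'.1 ^ (-s)) ^ q ∂(coneMeasure d).prod ν
        ≤ (ν univ * ENNReal.ofReal (1 / (α - s * q))) * (ENNReal.ofReal z.1 ^ (-s)) ^ q := by
    filter_upwards [ae_pos_fst_coneMeasure_prod ν] with z hz
    simp only [← ENNReal.rpow_mul, neg_mul]
    rw [lintegral_fun_fst _ _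
        (g := fun r' => coneKernel α β z.1 r' * ENNReal.ofReal r' ^ (-(s * q))) (by fun_prop),
      coneKernel.lintegral_mul_rpow_left hαβ hsq hz, mul_assoc]
  have hB : ∀ᵐ z' ∂(coneMeasure d).prod ν,
      ∫⁻ z, coneKernel α β z.1 z'.1 * (ENNReal.ofReal z.1 ^ (-s)) ^ p ∂(coneMeasure d).prod ν
        ≤ (ν univ * ENNReal.ofReal (1 / (s * p - β))) * (ENNReal.ofReal z'.1 ^ (-s)) ^ p := by
    filter_upwards [ae_pos_fst_coneMeasure_prod ν] with z' hz'
    simp only [← ENNReal.rpow_mul, neg_mul]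
    rw [lintegral_fun_fst _ _
        (g := fun r => coneKernel α β r z'.1 * ENNReal.ofReal r ^ (-(s * p))) (by fun_prop),
      coneKernel.lintegral_mul_rpow_right hαβ hsp hz', mul_assoc]
  refine ⟨_, ?_, fun hf hg => eLpNorm_le_of_schur hpq (by fun_prop) (by fun_prop) hw0 hA hB hf hg⟩
  have := hpq.pos
  have := hpq.symm.pos
  finiteness

end ConeProduct

theorem enorm_le_coneKernel {Ω : Type*} {α β : ℝ} {K : ℝ × Ω → ℝ × Ω → ℝ}
    (hKbound : ∀ (r r' : ℝ) (y y' : Ω), 0 < r → 0 < r' → r' < r →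
      |K (r, y) (r', y')| ≤ r ^ (-α) * r' ^ (-β))
    (hKzero : ∀ (r r' : ℝ) (y y' : Ω), 0 < r → 0 < r' → r ≤ r' → K (r, y) (r', y') = 0)
    {z z' : ℝ × Ω} (hz : 0 < z.1) (hz' : 0 < z'.1) : ‖K z z'‖ₑ ≤ coneKernel α β z.1 z'.1 := by
  obtain ⟨r, y⟩ := z
  obtain ⟨r', y'⟩ := z'
  by_cases hrr : r' < r
  · rw [coneKernel, if_pos hrr, ENNReal.ofReal_rpow_of_pos hz, ENNReal.ofReal_rpow_of_pos hz',
      ← ENNReal.ofReal_mul (by positivity), Real.enorm_eq_ofReal_abs]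
    exact ENNReal.ofReal_le_ofReal (hKbound r r' y y' hz hz' hrr)
  · simp [hKzero r r' y y' hz hz' (not_lt.1 hrr)]

theorem statement4_general (d : ℕ) (hd : 3 ≤ d)
    {Ω : Type*} [MeasurableSpace Ω] (ν : Measure Ω) [IsFiniteMeasure ν]
    (α β p : ℝ) (hαβ : α + β = d) (hα : 0 < α) (hp : (d : ℝ) / min α d < p)
    (K : ℝ × Ω → ℝ × Ω → ℝ)
    (hKbound : ∀ (r r' : ℝ) (y y' : Ω), 0 < r → 0 < r' → r' < r →
      |K (r, y) (r', y')| ≤ r ^ (-α) * r' ^ (-β))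
    (hKzero : ∀ (r r' : ℝ) (y y' : Ω), 0 < r → 0 < r' → r ≤ r' → K (r, y) (r', y') = 0) :
    ∃ C : ℝ, 0 < C ∧ ∀ f : ℝ × Ω → ℝ,
      MemLp f (ENNReal.ofReal p) ((coneMeasure d).prod ν) →
      eLpNorm (fun z : ℝ × Ω => ∫ z', K z z' * f z' ∂((coneMeasure d).prod ν))
          (ENNReal.ofReal p) ((coneMeasure d).prod ν)
        ≤ ENNReal.ofReal C * eLpNorm f (ENNReal.ofReal p) ((coneMeasure d).prod ν) := by
  have hd0 : (0 : ℝ) < d := by exact_mod_cast (by omega : 0 < d)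
  have hmin : 0 < min α d := lt_min hα hd0
  have hp1 : 1 < p := ((one_le_div hmin).2 (min_le_right _ _)).trans_lt hp
  have hdp : d < α * p := by
    have := (div_le_div_of_nonneg_left hd0.le hmin (min_le_left α d)).trans_lt hp
    rwa [div_lt_iff₀ hα, mul_comm] at this
  obtain ⟨C, hC, hbound⟩ := exists_eLpNorm_le_of_le_coneKernel ν hαβ hp1 hdp ℝ ℝ
  have hμ := ae_pos_fst_coneMeasure_prod (d := d) ν
  refine ⟨C.toReal + 1, by positivity, fun f hf => ?_⟩
  calc _ ≤ C * eLpNorm f (ENNReal.ofReal p) ((coneMeasure d).prod ν) :=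
        hbound hf.1 (hμ.mono fun z hz => enorm_integral_mul_le_lintegral
          (hμ.mono fun z' hz' => enorm_le_coneKernel hKbound hKzero hz hz') f)
    _ ≤ _ := by
        gcongr
        exact (ENNReal.le_ofReal_iff_toReal_le hC (by positivity)).2 (by linarith)

/-- Let `d ≥ 3`, let `(Ω, ν)` be a finite measure space, and let
`α + β = d`, `α > 0`, `d/min(α,d) < p < ∞`. If `K` is a measurable kernel on
`((0,∞)×Ω)²` with `|K(r,y,r',y')| ≤ r^{-α} (r')^{-β}` for `r > r'` and `K = 0` for `r ≤ r'`,
then `(Tf)(r,y) = ∫∫ K(r,y,r',y') f(r',y') (r')^{d-1} dr' dν(y')` is bounded on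
`L^p((0,∞)×Ω, r^{d-1} dr ⊗ ν)`. -/
theorem statement4 (d : ℕ) (hd : 3 ≤ d)
    {Ω : Type*} [MeasurableSpace Ω] (ν : Measure Ω) [IsFiniteMeasure ν]
    (α β p : ℝ) (hαβ : α + β = d) (hα : 0 < α) (hp : (d : ℝ) / min α d < p)
    (K : ℝ × Ω → ℝ × Ω → ℝ) (hKmeas : Measurable (Function.uncurry K))
    (hKbound : ∀ (r r' : ℝ) (y y' : Ω), 0 < r → 0 < r' → r' < r →
      |K (r, y) (r', y')| ≤ r ^ (-α) * r' ^ (-β))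
    (hKzero : ∀ (r r' : ℝ) (y y' : Ω), 0 < r → 0 < r' → r ≤ r' → K (r, y) (r', y') = 0) :
    ∃ C : ℝ, 0 < C ∧ ∀ f : ℝ × Ω → ℝ,
      MemLp f (ENNReal.ofReal p) ((coneMeasure d).prod ν) →
      eLpNorm (fun z : ℝ × Ω => ∫ z', K z z' * f z' ∂((coneMeasure d).prod ν))
          (ENNReal.ofReal p) ((coneMeasure d).prod ν)
        ≤ ENNReal.ofReal C * eLpNorm f (ENNReal.ofReal p) ((coneMeasure d).prod ν) :=
  statement4_general d hd ν α β p hαβ hα hp K hKbound hKzero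
end

section
/- There exists a constant C > 0 such that for every real μ ≥ 1/2 and all reals r, r' > 0 with r' ≥ 4r, one has I_μ(r) · K_μ(r') ≤ C · (2r/r')^{μ} · e^{-r'/4}. -/
open Real

/-- The modified Bessel function of the first kind, via the Poisson integral representation
`I_μ(r) = (2^{-μ} r^{μ} / (π^{1/2} Γ(μ + 1/2))) · ∫_{-1}^{1} (1 - t²)^{μ - 1/2} e^{-rt} dt`. -/
noncomputable def besselI (μ r : ℝ) : ℝ :=
  (2 ^ (-μ) * r ^ μ / (Real.sqrt π * Real.Gamma (μ + 1 / 2))) *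
    ∫ t in (-1 : ℝ)..1, (1 - t ^ 2) ^ (μ - 1 / 2) * Real.exp (-r * t)

/-- The modified Bessel function of the second kind, via the integral representation
`K_μ(r) = (π^{1/2} 2^{-μ} r^{μ} / Γ(μ + 1/2)) · ∫_{1}^{∞} e^{-rt} (t² - 1)^{μ - 1/2} dt`. -/
noncomputable def besselK (μ r : ℝ) : ℝ :=
  (Real.sqrt π * 2 ^ (-μ) * r ^ μ / Real.Gamma (μ + 1 / 2)) *
    ∫ t in Set.Ioi (1 : ℝ), Real.exp (-r * t) * (t ^ 2 - 1) ^ (μ - 1 / 2)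

open MeasureTheory Set
open scoped Interval

/-!
On `[-1, 1]` the integrand of `I_μ(r)` is at most `e^r`, so
`I_μ(r) ≤ 2/√π · (r/2)^μ e^r / Γ(μ + 1/2)`. For `K_μ`, write `t² - 1 = (t - 1)(t - 1 + 2)` and use
`(a + b)^p ≤ 2^p (a^p + b^p)`: the integral splits into two shifted Gamma integrals, of orders `2μ`
and `μ + 1/2`. The first is controlled by Legendre's duplication formula together with
`Γ(μ) ≤ 2 Γ(μ + 1/2)` (log-convexity of `Γ`), the second by `x^p e^{-x} ≤ Γ(p + 1)`, which trades
a factor `e^{-r'/2}` for powers of `r'`. This gives `K_μ(r') ≤ (1 + √π) (4/r')^μ Γ(μ + 1/2) e^{-r'/2}`,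
and the product of the two bounds is the claim because `r - r'/2 ≤ -r'/4`.
-/

lemma setIntegral_Ioi_comp_add_right (f : ℝ → ℝ) (a c : ℝ) :
    ∫ x in Ioi a, f (x + c) = ∫ x in Ioi (a + c), f x := by
  have := (measurePreserving_add_right volume c).setIntegral_preimage_emb
    (MeasurableEquiv.addRight c).measurableEmbedding f (Ioi (a + c))
  simpa using this

lemma integrableOn_Ioi_comp_add_right {f : ℝ → ℝ} {a c : ℝ} :
    IntegrableOn (fun x => f (x + c)) (Ioi a) ↔ IntegrableOn f (Ioi (a + c)) := by
  have := (measurePreserving_add_right volume c).integrableOn_comp_preimage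
    (MeasurableEquiv.addRight c).measurableEmbedding (f := f) (s := Ioi (a + c))
  simpa [Function.comp_def] using this

lemma exp_neg_mul_sub_one_rpow_comp_add_one (b q : ℝ) :
    (fun s : ℝ => exp (-b * (s + 1)) * (s + 1 - 1) ^ q) =
      fun s => exp (-b) * (s ^ (q + 1 - 1) * exp (-(b * s))) := by
  ext s
  rw [add_sub_cancel_right, add_sub_cancel_right, mul_add, mul_one, neg_mul, exp_add]
  ring_nf

lemma integrableOn_exp_neg_mul_sub_one_rpow_Ioi {b q : ℝ} (hb : 0 < b) (hq : -1 < q) :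
    IntegrableOn (fun t => exp (-b * t) * (t - 1) ^ q) (Ioi 1) := by
  have h := integrableOn_Ioi_comp_add_right (f := fun t => exp (-b * t) * (t - 1) ^ q)
    (a := 0) (c := 1)
  rw [zero_add, exp_neg_mul_sub_one_rpow_comp_add_one] at h
  refine h.mp (Integrable.const_mul ?_ _)
  simpa [IntegrableOn] using integrableOn_rpow_mul_exp_neg_mul_rpow hq one_pos hb

lemma integral_exp_neg_mul_sub_one_rpow_Ioi {b q : ℝ} (hb : 0 < b) (hq : -1 < q) :
    ∫ t in Ioi 1, exp (-b * t) * (t - 1) ^ q = exp (-b) * ((1 / b) ^ (q + 1) * Gamma (q + 1)) := by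
  have h := setIntegral_Ioi_comp_add_right (fun t => exp (-b * t) * (t - 1) ^ q) 0 1
  rw [zero_add, exp_neg_mul_sub_one_rpow_comp_add_one] at h
  rw [← h, integral_const_mul, integral_rpow_mul_exp_neg_mul_Ioi (by linarith) hb]

lemma Real.add_rpow_le_two_rpow_mul_add_rpow {a b p : ℝ} (ha : 0 ≤ a) (hb : 0 ≤ b) (hp : 0 ≤ p) :
    (a + b) ^ p ≤ 2 ^ p * (a ^ p + b ^ p) := by
  wlog hab : b ≤ a generalizing a b
  · simpa only [add_comm] using this hb ha (le_of_not_ge hab)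
  calc (a + b) ^ p ≤ (2 * a) ^ p := by gcongr; linarith
    _ = 2 ^ p * a ^ p := mul_rpow zero_le_two ha
    _ ≤ 2 ^ p * (a ^ p + b ^ p) := by gcongr; exact le_add_of_nonneg_right (rpow_nonneg hb p)

lemma sq_sub_one_rpow_le {p t : ℝ} (hp : 0 ≤ p) (ht : 1 < t) :
    (t ^ 2 - 1) ^ p ≤ 2 ^ p * ((t - 1) ^ (2 * p) + 2 ^ p * (t - 1) ^ p) := by
  have hs : 0 < t - 1 := sub_pos.mpr ht
  calc (t ^ 2 - 1) ^ p = (t - 1) ^ p * ((t - 1) + 2) ^ p := by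
        rw [← mul_rpow hs.le (by linarith)]; ring_nf
    _ ≤ (t - 1) ^ p * (2 ^ p * ((t - 1) ^ p + 2 ^ p)) := by
        gcongr; exact add_rpow_le_two_rpow_mul_add_rpow hs.le zero_le_two hp
    _ = 2 ^ p * ((t - 1) ^ (2 * p) + 2 ^ p * (t - 1) ^ p) := by
        rw [two_mul, rpow_add hs]; ring

lemma integral_exp_neg_mul_sq_sub_one_rpow_Ioi_le {b p : ℝ} (hb : 0 < b) (hp : 0 ≤ p) :
    ∫ t in Ioi 1, exp (-b * t) * (t ^ 2 - 1) ^ p ≤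
      2 ^ p * exp (-b) * ((1 / b) ^ (2 * p + 1) * Gamma (2 * p + 1)
        + 2 ^ p * ((1 / b) ^ (p + 1) * Gamma (p + 1))) := by
  have h2p := integrableOn_exp_neg_mul_sub_one_rpow_Ioi hb (q := 2 * p) (by linarith)
  have hp' := integrableOn_exp_neg_mul_sub_one_rpow_Ioi hb (q := p) (by linarith)
  calc ∫ t in Ioi 1, exp (-b * t) * (t ^ 2 - 1) ^ p
      ≤ ∫ t in Ioi 1, 2 ^ p * (exp (-b * t) * (t - 1) ^ (2 * p)
          + 2 ^ p * (exp (-b * t) * (t - 1) ^ p)) := by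
        refine integral_mono_of_nonneg ?_ ((h2p.add (hp'.const_mul _)).const_mul _) ?_
        · filter_upwards [ae_restrict_mem measurableSet_Ioi] with t ht
          have : 0 ≤ t ^ 2 - 1 := by nlinarith [mem_Ioi.mp ht]
          positivity
        · filter_upwards [ae_restrict_mem measurableSet_Ioi] with t ht
          calc exp (-b * t) * (t ^ 2 - 1) ^ p
              ≤ exp (-b * t) * (2 ^ p * ((t - 1) ^ (2 * p) + 2 ^ p * (t - 1) ^ p)) := by
                gcongr; exact sq_sub_one_rpow_le hp ht
            _ = _ := by ring
    _ = _ := by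
        rw [integral_const_mul, integral_add h2p (hp'.const_mul _), integral_const_mul,
          integral_exp_neg_mul_sub_one_rpow_Ioi hb (by linarith),
          integral_exp_neg_mul_sub_one_rpow_Ioi hb (by linarith)]
        ring

lemma Real.Gamma_add_half_le_sqrt_mul_Gamma {x : ℝ} (hx : 0 < x) :
    Gamma (x + 1 / 2) ≤ √x * Gamma x := by
  have h := Gamma_mul_add_mul_le_rpow_Gamma_mul_rpow_Gamma hx (add_pos hx one_pos)
    one_half_pos one_half_pos (add_halves 1)
  rw [Gamma_add_one hx.ne', mul_rpow hx.le (Gamma_pos_of_pos hx).le, ← mul_assoc,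
    mul_comm _ (x ^ _), mul_assoc, ← rpow_add (Gamma_pos_of_pos hx), add_halves, rpow_one,
    ← sqrt_eq_rpow] at h
  convert h using 2
  ring

lemma Real.rpow_mul_exp_neg_le_Gamma {p x : ℝ} (hp : 0 ≤ p) (hx : 0 ≤ x) :
    x ^ p * exp (-x) ≤ Gamma (p + 1) := by
  have hint : IntegrableOn (fun y => exp (-y) * y ^ p) (Ioi 0) := by
    simpa using GammaIntegral_convergent (s := p + 1) (by linarith)
  calc x ^ p * exp (-x) = ∫ y in Ioi x, x ^ p * exp (-y) := by
        rw [integral_const_mul, integral_exp_neg_Ioi]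
    _ ≤ ∫ y in Ioi x, exp (-y) * y ^ p := by
        refine setIntegral_mono_on ((integrableOn_exp_neg_Ioi x).const_mul _)
          (hint.mono_set (Ioi_subset_Ioi hx)) measurableSet_Ioi fun y hy => ?_
        rw [mul_comm]
        gcongr
        exact le_of_lt hy
    _ ≤ ∫ y in Ioi 0, exp (-y) * y ^ p :=
        setIntegral_mono_set hint
          ((ae_restrict_mem measurableSet_Ioi).mono fun y hy =>
            mul_nonneg (exp_pos _).le (rpow_nonneg (le_of_lt hy) _))
          (Filter.Eventually.of_forall (Ioi_subset_Ioi hx))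
    _ = Gamma (p + 1) := by
        rw [Gamma_eq_integral (by linarith)]
        simp

lemma Real.Gamma_le_two_mul_Gamma_add_half {μ : ℝ} (hμ : 1 / 2 ≤ μ) :
    Gamma μ ≤ 2 * Gamma (μ + 1 / 2) := by
  have hμ0 : 0 < μ := by linarith
  have h := Gamma_add_half_le_sqrt_mul_Gamma (x := μ + 1 / 2) (by linarith)
  rw [add_assoc, add_halves, Gamma_add_one hμ0.ne'] at h
  have hsqrt : √(μ + 1 / 2) ≤ 2 * μ := sqrt_le_iff.mpr ⟨by linarith, by nlinarith⟩
  refine le_of_mul_le_mul_left ?_ hμ0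
  calc μ * Gamma μ ≤ √(μ + 1 / 2) * Gamma (μ + 1 / 2) := h
    _ ≤ 2 * μ * Gamma (μ + 1 / 2) := by gcongr
    _ = μ * (2 * Gamma (μ + 1 / 2)) := by ring

lemma Real.sqrt_pi_mul_Gamma_two_mul_le {μ : ℝ} (hμ : 1 / 2 ≤ μ) :
    √π * Gamma (2 * μ) ≤ 4 ^ μ * Gamma (μ + 1 / 2) ^ 2 := by
  have hdup : √π * Gamma (2 * μ) = 2 ^ (2 * μ - 1) * (Gamma μ * Gamma (μ + 1 / 2)) := by
    have h : (2 : ℝ) ^ (2 * μ - 1) * 2 ^ (1 - 2 * μ) = 1 := by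
      rw [← rpow_add two_pos]; norm_num
    rw [Gamma_mul_Gamma_add_half]
    linear_combination (-(√π * Gamma (2 * μ))) * h
  have h4 : (4 : ℝ) ^ μ = 2 ^ (2 * μ - 1) * 2 := by
    rw [rpow_sub_one two_ne_zero, div_mul_cancel₀ _ two_ne_zero, rpow_mul zero_le_two]
    norm_num
  calc √π * Gamma (2 * μ) = 2 ^ (2 * μ - 1) * (Gamma μ * Gamma (μ + 1 / 2)) := hdup
    _ ≤ 2 ^ (2 * μ - 1) * (2 * Gamma (μ + 1 / 2) * Gamma (μ + 1 / 2)) := by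
        gcongr; exact Gamma_le_two_mul_Gamma_add_half hμ
    _ = 4 ^ μ * Gamma (μ + 1 / 2) ^ 2 := by rw [h4]; ring

lemma exp_neg_half_div_sqrt_le_Gamma {μ b : ℝ} (hμ : 1 / 2 ≤ μ) (hb : 0 < b) :
    exp (-(b / 2)) / √b ≤ Gamma (μ + 1 / 2) * 2 ^ μ * (1 / b) ^ μ / √2 := by
  have h := rpow_mul_exp_neg_le_Gamma (p := μ - 1 / 2) (x := b / 2) (by linarith) (by positivity)
  have hb' : b ^ μ = ((1 / b) ^ μ)⁻¹ := by simp [inv_rpow hb.le]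
  rw [show μ - 1 / 2 + 1 = μ + 1 / 2 by ring, rpow_sub (by positivity),
    div_rpow hb.le zero_le_two, hb', ← sqrt_eq_rpow, sqrt_div' _ zero_le_two] at h
  calc exp (-(b / 2)) / √b = ((1 / b) ^ μ)⁻¹ / 2 ^ μ / (√b / √2) * exp (-(b / 2)) *
        (2 ^ μ * (1 / b) ^ μ / √2) := by field_simp
    _ ≤ Gamma (μ + 1 / 2) * (2 ^ μ * (1 / b) ^ μ / √2) := by gcongr
    _ = Gamma (μ + 1 / 2) * 2 ^ μ * (1 / b) ^ μ / √2 := by ring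

lemma besselK_le {μ b : ℝ} (hμ : 1 / 2 ≤ μ) (hb : 0 < b) :
    besselK μ b ≤ (1 + √π) * (4 / b) ^ μ * Gamma (μ + 1 / 2) * exp (-(b / 2)) := by
  unfold besselK
  have hB := integral_exp_neg_mul_sq_sub_one_rpow_Ioi_le hb (p := μ - 1 / 2) (by linarith)
  rw [show 2 * (μ - 1 / 2) + 1 = 2 * μ by ring, show μ - 1 / 2 + 1 = μ + 1 / 2 by ring] at hB
  -- rewrite every power through `w = 2^μ`, `v = b^(-μ)`, `√2`, `√b`; the rest is field algebra
  set G := Gamma (μ + 1 / 2)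
  set w := (2 : ℝ) ^ μ
  set v := (1 / b) ^ μ
  set E := exp (-(b / 2))
  have hG : 0 < G := Gamma_pos_of_pos (by linarith)
  have hw : 0 < w := by positivity
  have hv : 0 < v := by positivity
  have hE : E ≤ 1 := exp_le_one_iff.mpr (by linarith)
  have hs2 : 1 ≤ √2 := by rw [one_le_sqrt]; norm_num
  have e1 : (2 : ℝ) ^ (-μ) = w⁻¹ := rpow_neg zero_le_two μ
  have e2 : b ^ μ = v⁻¹ := by simp [v, inv_rpow hb.le]
  have e3 : (2 : ℝ) ^ (μ - 1 / 2) = w / √2 := by rw [rpow_sub two_pos, sqrt_eq_rpow]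
  have e4 : (1 / b) ^ (2 * μ) = v * v := by rw [two_mul, rpow_add (by positivity)]
  have e5 : (1 / b) ^ (μ + 1 / 2) = v / √b := by
    rw [rpow_add (by positivity), div_rpow zero_le_one hb.le (1 / 2), one_rpow, ← sqrt_eq_rpow,
      mul_one_div]
  have e6 : (4 / b) ^ μ = w * w * v := by
    rw [show 4 / b = 2 * 2 * (1 / b) by ring, mul_rpow (by positivity) (by positivity),
      mul_rpow zero_le_two zero_le_two]
  have eE : exp (-b) = E ^ 2 := by rw [← exp_nat_mul]; ring_nf
  have hdup : √π * Gamma (2 * μ) ≤ w * w * G ^ 2 := by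
    rw [← mul_rpow zero_le_two zero_le_two]; norm_num
    exact sqrt_pi_mul_Gamma_two_mul_le hμ
  have hgam : E / √b ≤ G * w * v / √2 := exp_neg_half_div_sqrt_le_Gamma hμ hb
  rw [e1, e2, e6]
  rw [e3, e4, e5, eE] at hB
  calc √π * w⁻¹ * v⁻¹ / G * ∫ t in Ioi 1, exp (-b * t) * (t ^ 2 - 1) ^ (μ - 1 / 2)
      ≤ √π * w⁻¹ * v⁻¹ / G *
          (w / √2 * E ^ 2 * (v * v * Gamma (2 * μ) + w / √2 * (v / √b * G))) := by gcongr
    _ = v * E ^ 2 / √2 * (√π * Gamma (2 * μ)) / G + √π * w * E * (E / √b) / 2 := by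
        field_simp
        linear_combination (-(E ^ 2 * w * G)) * mul_self_sqrt (zero_le_two : (0 : ℝ) ≤ 2)
    _ ≤ v * E ^ 2 / √2 * (w * w * G ^ 2) / G + √π * w * E * (G * w * v / √2) / 2 := by
        gcongr
    _ = (E / √2) * (w * w * v * G * E) + √π / (2 * √2) * (w * w * v * G * E) := by
        field_simp
    _ ≤ 1 * (w * w * v * G * E) + √π * (w * w * v * G * E) := by
        gcongr
        · exact div_le_one_of_le₀ (hE.trans hs2) (by positivity)
        · exact div_le_self (sqrt_nonneg _) (by nlinarith)
    _ = (1 + √π) * (w * w * v) * G * E := by ring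

lemma integral_one_sub_sq_rpow_mul_exp_neg_mul_le {p r : ℝ} (hp : 0 ≤ p) (hr : 0 ≤ r) :
    ∫ t in (-1 : ℝ)..1, (1 - t ^ 2) ^ p * exp (-r * t) ≤ 2 * exp r := by
  have hbound : ∀ t ∈ Ι (-1 : ℝ) 1, ‖(1 - t ^ 2) ^ p * exp (-r * t)‖ ≤ exp r := by
    intro t ht
    rw [uIoc_of_le (by norm_num)] at ht
    have h0 : 0 ≤ 1 - t ^ 2 := by nlinarith [ht.1, ht.2]
    rw [norm_of_nonneg (by positivity)]
    calc (1 - t ^ 2) ^ p * exp (-r * t) ≤ 1 * exp r := by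
          gcongr
          · exact rpow_le_one h0 (by nlinarith) hp
          · nlinarith [ht.1, ht.2]
      _ = exp r := one_mul _
  calc ∫ t in (-1 : ℝ)..1, (1 - t ^ 2) ^ p * exp (-r * t)
      ≤ ‖∫ t in (-1 : ℝ)..1, (1 - t ^ 2) ^ p * exp (-r * t)‖ := le_norm_self _
    _ ≤ exp r * |1 - (-1)| := intervalIntegral.norm_integral_le_of_norm_le_const hbound
    _ = 2 * exp r := by norm_num; ring

lemma besselI_le {μ r : ℝ} (hμ : 1 / 2 ≤ μ) (hr : 0 ≤ r) :
    besselI μ r ≤ 2 / √π * (r / 2) ^ μ * exp r / Gamma (μ + 1 / 2) := by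
  calc besselI μ r ≤ 2 ^ (-μ) * r ^ μ / (√π * Gamma (μ + 1 / 2)) * (2 * exp r) :=
        mul_le_mul_of_nonneg_left (integral_one_sub_sq_rpow_mul_exp_neg_mul_le (by linarith) hr)
          (by positivity)
    _ = 2 / √π * (r / 2) ^ μ * exp r / Gamma (μ + 1 / 2) := by
        rw [div_rpow hr zero_le_two, rpow_neg zero_le_two]
        field_simp

lemma besselK_nonneg {μ b : ℝ} (hμ : -(1 / 2) ≤ μ) (hb : 0 ≤ b) : 0 ≤ besselK μ b := by
  have hG : 0 ≤ Gamma (μ + 1 / 2) := Gamma_nonneg_of_nonneg (by linarith)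
  refine mul_nonneg (by positivity) (setIntegral_nonneg measurableSet_Ioi fun t ht => ?_)
  have : 0 ≤ t ^ 2 - 1 := by nlinarith [mem_Ioi.mp ht]
  positivity

/-- There is `C > 0` such that for all `μ ≥ 1/2` and all `r, r' > 0` with
`r' ≥ 4r`, one has `I_μ(r) · K_μ(r') ≤ C · (2r/r')^{μ} · e^{-r'/4}`. -/
theorem statement11 :
    ∃ C : ℝ, 0 < C ∧ ∀ μ r r' : ℝ, 1 / 2 ≤ μ → 0 < r → 0 < r' → 4 * r ≤ r' →
      besselI μ r * besselK μ r' ≤ C * (2 * r / r') ^ μ * Real.exp (-r' / 4) := by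
  refine ⟨2 / √π * (1 + √π), by positivity, fun μ r r' hμ hr hr' hrr' => ?_⟩
  calc besselI μ r * besselK μ r'
      ≤ (2 / √π * (r / 2) ^ μ * exp r / Gamma (μ + 1 / 2)) *
          ((1 + √π) * (4 / r') ^ μ * Gamma (μ + 1 / 2) * exp (-(r' / 2))) :=
        mul_le_mul (besselI_le hμ hr.le) (besselK_le hμ hr') (besselK_nonneg (by linarith) hr'.le)
          (by positivity)
    _ = 2 / √π * (1 + √π) * (r / 2 * (4 / r')) ^ μ * exp (r - r' / 2) := by
        rw [mul_rpow (by positivity) (by positivity), sub_eq_add_neg, exp_add]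
        field_simp
    _ ≤ 2 / √π * (1 + √π) * (2 * r / r') ^ μ * exp (-r' / 4) := by
        rw [show r / 2 * (4 / r') = 2 * r / r' by field_simp; ring]
        gcongr
        linarith
end
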